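/- arXiv:2405.03687 — 2 statements merged into one kernel-verified Lean document; each statement's English description precedes it below -/
import Mathlib

section
/- Let p ∈ [0,1)^n sum to an integer k ≥ 0. Then ∑_{A⊆{1,…,n}, |A|=k} f_p(A) = ∑_{A⊆{1,…,n}, |A|<k} (k − |A|) · ∏_{i∈A} p_i ∏_{i∉A} (1−p_i). (In probabilistic terms: the Sampford normalizing constant equals E[1{|B| < k}·(k − |B|)] for the Poisson trial B with success probabilities p.) -/
open Finset

/-- Sampford's (unnormalized) probability mass:
`f_p(A) = (∑_{i∈A}(1−p_i)) · ∏_{j∈A} p_j · ∏_{j∉A}(1−p_j)`. -/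
noncomputable def sampf {n : ℕ} (p : Fin n → ℝ) (A : Finset (Fin n)) : ℝ :=
  (∑ i ∈ A, (1 - p i)) * (∏ j ∈ A, p j) * ∏ j ∈ Aᶜ, (1 - p j)

/-!
Write `w(A) = ∏_{j∈A} p_j ∏_{j∉A} (1 - p_j)` and `T_m = ∑_{|A|=m} f_p(A)`. Since
`(1 - p_i) w(A) = p_i w(A ∖ {i})` for `i ∈ A`, removing one element of `A` turns `T_{m+1}` into
`∑_{|B|=m} (∑_{i∉B} p_i) w(B)`. For `|B| = m` we have
`∑_{i∉B} p_i = ∑_{i∈B} (1 - p_i) + (∑_i p_i - m)`, so `T_{m+1} = T_m + (∑_i p_i - m) ∑_{|B|=m} w(B)`,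
and telescoping from `T_0 = 0` gives `T_k = ∑_{|A|<k} (∑_i p_i - |A|) w(A)`.
-/

theorem sum_filter_card_lt_succ {ι M : Type*} [Fintype ι] [DecidableEq ι] [AddCommMonoid M]
    (f : Finset ι → M) (m : ℕ) :
    ∑ A ∈ univ.filter (fun A => #A < m + 1), f A =
      ∑ A ∈ univ.filter (fun A => #A < m), f A + ∑ A ∈ powersetCard m univ, f A := by
  rw [powersetCard_eq_filter, powerset_univ,
    ← sum_union (disjoint_filter.2 fun A _ h => h.ne), ← filter_or,
    filter_congr fun A _ => Nat.lt_succ_iff_lt_or_eq]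

section PoissonWeight

variable {ι R : Type*} [Fintype ι] [DecidableEq ι] [CommRing R] (p : ι → R)

def poissonWeight (A : Finset ι) : R :=
  (∏ j ∈ A, p j) * ∏ j ∈ Aᶜ, (1 - p j)

theorem one_sub_mul_poissonWeight_of_mem {A : Finset ι} {i : ι} (hi : i ∈ A) :
    (1 - p i) * poissonWeight p A = p i * poissonWeight p (A.erase i) := by
  rw [poissonWeight, poissonWeight, ← mul_prod_erase A p hi, compl_erase,
    prod_insert (notMem_compl.2 hi)]
  ring

theorem sum_powersetCard_succ_sampf_eq_sum_compl (m : ℕ) :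
    ∑ A ∈ powersetCard (m + 1) univ, (∑ i ∈ A, (1 - p i)) * poissonWeight p A =
      ∑ B ∈ powersetCard m univ, (∑ i ∈ Bᶜ, p i) * poissonWeight p B := by
  simp only [sum_mul]
  rw [sum_sigma', sum_sigma']
  refine sum_nbij' (fun x => ⟨x.1.erase x.2, x.2⟩) (fun x => ⟨insert x.2 x.1, x.2⟩)
    ?_ ?_ ?_ ?_ ?_
  all_goals
    rintro ⟨A, i⟩ h
    simp only [mem_sigma, mem_powersetCard_univ, mem_compl] at h
  · simp [card_erase_of_mem h.2, h.1]
  · simp [card_insert_of_notMem h.2, h.1]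
  · simp [insert_erase h.2]
  · simp [erase_insert h.2]
  · exact one_sub_mul_poissonWeight_of_mem p h.2

theorem sum_compl_eq_sum_one_sub_add (A : Finset ι) :
    ∑ i ∈ Aᶜ, p i = ∑ i ∈ A, (1 - p i) + (∑ i, p i - #A) := by
  rw [sum_sub_distrib, sum_const, nsmul_one, ← sum_compl_add_sum A p]
  ring

theorem sum_powersetCard_succ_sampf (m : ℕ) :
    ∑ A ∈ powersetCard (m + 1) univ, (∑ i ∈ A, (1 - p i)) * poissonWeight p A =
      ∑ A ∈ powersetCard m univ, (∑ i ∈ A, (1 - p i)) * poissonWeight p A +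
        ∑ A ∈ powersetCard m univ, (∑ i, p i - m) * poissonWeight p A := by
  rw [sum_powersetCard_succ_sampf_eq_sum_compl, ← sum_add_distrib]
  refine sum_congr rfl fun A hA => ?_
  rw [sum_compl_eq_sum_one_sub_add, mem_powersetCard_univ.1 hA]
  ring

theorem sum_powersetCard_sampf_eq_sum_card_lt (k : ℕ) :
    ∑ A ∈ powersetCard k univ, (∑ i ∈ A, (1 - p i)) * poissonWeight p A =
      ∑ A ∈ univ.filter (fun A => #A < k), (∑ i, p i - #A) * poissonWeight p A := by
  induction k with
  | zero => simp
  | succ m ih =>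
    rw [sum_powersetCard_succ_sampf, ih, sum_filter_card_lt_succ]
    congr 1
    exact sum_congr rfl fun A hA => by rw [mem_powersetCard_univ.1 hA]

end PoissonWeight

theorem sampford_denominator_eq_general {n k : ℕ} (p : Fin n → ℝ)
    (hsum : ∑ i, p i = (k : ℝ)) :
    ∑ A ∈ powersetCard k (univ : Finset (Fin n)), sampf p A =
      ∑ A ∈ (univ : Finset (Finset (Fin n))).filter (fun A => A.card < k),
        ((k : ℝ) - A.card) * ((∏ i ∈ A, p i) * ∏ i ∈ Aᶜ, (1 - p i)) := by
  have h := sum_powersetCard_sampf_eq_sum_card_lt p k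
  simp only [poissonWeight, hsum] at h
  simpa only [sampf, mul_assoc] using h

/-- The Sampford normalizing constant equals `E[1{|B| < k}·(k − |B|)]` for the
Poisson trial `B` with success probabilities `p`. -/
theorem sampford_denominator_eq {n k : ℕ} (p : Fin n → ℝ)
    (hp : ∀ i, 0 ≤ p i ∧ p i < 1) (hsum : ∑ i, p i = (k : ℝ)) :
    ∑ A ∈ powersetCard k (univ : Finset (Fin n)), sampf p A =
      ∑ A ∈ (univ : Finset (Finset (Fin n))).filter (fun A => A.card < k),
        ((k : ℝ) - A.card) * ((∏ i ∈ A, p i) * ∏ i ∈ Aᶜ, (1 - p i)) :=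
  sampford_denominator_eq_general p hsum
end

section
/- Let r be a rounding rule for n parties (n ≥ 2) that satisfies selection monotonicity, let p ∈ [0,1)^n sum to an integer k, and let δ be a real number with 0 < δ < min(p_2, 1 − p_1). Define p' ∈ [0,1)^n by p'_1 := p_1 + δ, p'_2 := p_2 − δ, and p'_i := p_i for all i ≥ 3. Then for every k-element subset T of {1,…,n}, it holds that |P[r(p') = T] − P[r(p) = T]| ≤ 2δ. -/
/-!
Let `q = p + ε (e_u - e_v)` with `u ∈ T`, `v ∉ T`. Selection monotonicity makes `r q A - r p A`
nonnegative on the sets containing `u` but not `v`, and nonpositive on those containing `v` but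
not `u`. The marginals of `u` and `v` change by `ε` and `-ε`, so the first family gains `2ε` minus
what the second one loses, whence `0 ≤ r q T - r p T ≤ 2ε`. This settles the cases
where exactly one of `u, v` lies in `T`. If both do, `p` and `q` are compared through the common
point `p + ε (e_u - e_j)`, reached from both by moves of the first kind, for a party `j ∉ T` of
positive residue; if neither does, through `p + ε (e_w - e_v)` for some `w ∈ T`. These detours need
`ε ≤ p j`, resp. `ε < 1 - p w`, so a long move is cut into short ones.
-/

open Finset

/-- A rounding rule for `n` parties: for every residue vector `p ∈ [0,1)^n`
summing to an integer `k`, `r p` is a probability distribution over subsets of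
`{1,…,n}` supported on `k`-element subsets whose marginals are the `p i`. -/
def IsRoundingRule (n : ℕ) (r : (Fin n → ℝ) → Finset (Fin n) → ℝ) : Prop :=
  ∀ (p : Fin n → ℝ) (k : ℕ), (∀ i, 0 ≤ p i ∧ p i < 1) → (∑ i, p i = (k : ℝ)) →
    (∀ A : Finset (Fin n), 0 ≤ r p A) ∧
    (∑ A : Finset (Fin n), r p A = 1) ∧
    (∀ A : Finset (Fin n), r p A ≠ 0 → A.card = k) ∧
    (∀ i : Fin n,
      ∑ A ∈ (univ : Finset (Finset (Fin n))).filter (fun A => i ∈ A), r p A = p i)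

/-- Selection monotonicity of a rounding rule. -/
def SelectionMonotone (n : ℕ) (r : (Fin n → ℝ) → Finset (Fin n) → ℝ) : Prop :=
  ∀ (k : ℕ) (p p' : Fin n → ℝ),
    (∀ i, 0 ≤ p i ∧ p i < 1) → (∀ i, 0 ≤ p' i ∧ p' i < 1) →
    (∑ i, p i = (k : ℝ)) → (∑ i, p' i = (k : ℝ)) →
    ∀ T : Finset (Fin n), T.card = k →
      (∀ i ∈ T, p i ≤ p' i) → (∀ i ∉ T, p' i ≤ p i) →
      r p T ≤ r p' T

theorem abs_sub_le_mul_of_small_steps {g : ℝ → ℝ} {C δ ε : ℝ} (hε : 0 < ε) (hδ : 0 ≤ δ)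
    (hstep : ∀ s t, 0 ≤ s → s ≤ t → t ≤ δ → t - s < ε → |g t - g s| ≤ C * (t - s)) :
    |g δ - g 0| ≤ C * δ := by
  have hsteps : ∀ m : ℕ, ∀ x, 0 ≤ x → x ≤ δ → x ≤ m * (ε / 2) → |g x - g 0| ≤ C * x := by
    intro m
    induction m with
    | zero =>
      intro x hx _ hxm
      obtain rfl : x = 0 := by simp only [CharP.cast_eq_zero, zero_mul] at hxm; linarith
      simp
    | succ m ih =>
      intro x hx hxδ hxm
      by_cases hxε : x < ε
      · simpa using hstep 0 x le_rfl hx hxδ (by simpa using hxε)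
      · have hy := ih (x - ε / 2) (by linarith) (by linarith) (by push_cast at hxm; linarith)
        have hlast := hstep (x - ε / 2) x (by linarith) (by linarith) hxδ (by linarith)
        calc |g x - g 0| ≤ |g x - g (x - ε / 2)| + |g (x - ε / 2) - g 0| := abs_sub_le _ _ _
          _ ≤ C * (x - (x - ε / 2)) + C * (x - ε / 2) := add_le_add hlast hy
          _ = C * x := by ring
  obtain ⟨m, hm⟩ := exists_nat_ge (δ / (ε / 2))
  exact hsteps m δ hδ le_rfl (by rwa [div_le_iff₀ (by positivity)] at hm)

theorem Finset.sum_filter_mem_sub_sum_filter_mem {α M : Type*} [DecidableEq α] [AddCommGroup M]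
    (s : Finset (Finset α)) (f : Finset α → M) (u v : α) :
    ∑ A ∈ s with u ∈ A, f A - ∑ A ∈ s with v ∈ A, f A =
      ∑ A ∈ s with u ∈ A ∧ v ∉ A, f A - ∑ A ∈ s with v ∈ A ∧ u ∉ A, f A := by
  rw [← sum_filter_add_sum_filter_not (s.filter (u ∈ ·)) (v ∈ ·),
    ← sum_filter_add_sum_filter_not (s.filter (v ∈ ·)) (u ∈ ·)]
  simp only [filter_filter, and_comm (a := v ∈ _)]
  abel

variable {n k : ℕ}

def IsResidueVector (k : ℕ) (p : Fin n → ℝ) : Prop :=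
  (∀ i, 0 ≤ p i ∧ p i < 1) ∧ ∑ i, p i = k

def transfer (u v : Fin n) : Fin n → ℝ := Pi.single u 1 - Pi.single v 1

section transfer

variable {p : Fin n → ℝ} {u v i : Fin n} {t : ℝ}

theorem add_smul_transfer_apply_left (huv : u ≠ v) : (p + t • transfer u v) u = p u + t := by
  simp [transfer, huv]

theorem add_smul_transfer_apply_right (huv : u ≠ v) : (p + t • transfer u v) v = p v - t := by
  simp [transfer, huv.symm, sub_eq_add_neg]

theorem add_smul_transfer_apply_of_ne (hu : i ≠ u) (hv : i ≠ v) :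
    (p + t • transfer u v) i = p i := by
  simp [transfer, hu, hv]

theorem sum_transfer (u v : Fin n) : ∑ i, transfer u v i = 0 := by
  simp [transfer, sum_sub_distrib]

theorem le_add_smul_transfer_apply (ht : 0 ≤ t) (hv : i ≠ v) :
    p i ≤ (p + t • transfer u v) i := by
  by_cases hu : i = u
  · subst hu
    simp [transfer, hv, ht]
  · rw [add_smul_transfer_apply_of_ne hu hv]

theorem add_smul_transfer_apply_le (ht : 0 ≤ t) (hu : i ≠ u) :
    (p + t • transfer u v) i ≤ p i := by
  by_cases hv : i = v
  · subst hv
    simp [transfer, hu, ht]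
  · rw [add_smul_transfer_apply_of_ne hu hv]

end transfer

namespace IsResidueVector

variable {p : Fin n → ℝ} {u v : Fin n} {t : ℝ} {T : Finset (Fin n)}

theorem add_smul_transfer (hp : IsResidueVector k p) (huv : u ≠ v) (ht : 0 ≤ t)
    (hu : p u + t < 1) (hv : t ≤ p v) :
    IsResidueVector k (p + t • transfer u v) := by
  refine ⟨fun i => ?_, ?_⟩
  · by_cases hiu : i = u
    · subst hiu
      rw [add_smul_transfer_apply_left huv]
      exact ⟨by linarith [(hp.1 i).1], hu⟩
    by_cases hiv : i = v
    · subst hiv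
      rw [add_smul_transfer_apply_right huv]
      exact ⟨by linarith, by linarith [(hp.1 i).2]⟩
    rw [add_smul_transfer_apply_of_ne hiu hiv]
    exact hp.1 i
  · simp [sum_add_distrib, ← mul_sum, sum_transfer, hp.2]

theorem exists_notMem_pos (hp : IsResidueVector k p) (hT : T.card = k) (hne : T.Nonempty) : ∃ j ∉ T, 0 < p j := by
  by_contra! hout
  have hin : ∑ i ∈ T, p i < T.card := by
    simpa using sum_lt_sum_of_nonempty hne fun i _ => (hp.1 i).2
  have hcompl : ∑ i ∈ Tᶜ, p i ≤ 0 := sum_nonpos fun j hj => hout j (mem_compl.mp hj)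
  have htotal := sum_add_sum_compl T p
  rw [hp.2, ← hT] at htotal
  linarith

theorem nonempty_of_pos (hp : IsResidueVector k p) (hT : T.card = k) (hv : 0 < p v) :
    T.Nonempty := by
  have hk : (0 : ℝ) < k :=
    hp.2 ▸ hv.trans_le (single_le_sum (fun i _ => (hp.1 i).1) (mem_univ v))
  exact card_pos.mp (hT ▸ by exact_mod_cast hk)

end IsResidueVector

section rounding

variable {r : (Fin n → ℝ) → Finset (Fin n) → ℝ} {p q : Fin n → ℝ} {T : Finset (Fin n)}

theorem IsRoundingRule.apply_eq_zero (hr : IsRoundingRule n r) (hp : IsResidueVector k p)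
    (hT : T.card ≠ k) : r p T = 0 := by
  by_contra h
  exact hT ((hr p k hp.1 hp.2).2.2.1 T h)

theorem SelectionMonotone.apply_le (hmono : SelectionMonotone n r) (hr : IsRoundingRule n r)
    (hp : IsResidueVector k p) (hq : IsResidueVector k q)
    (hin : ∀ i ∈ T, p i ≤ q i) (hout : ∀ i ∉ T, q i ≤ p i) : r p T ≤ r q T := by
  by_cases hT : T.card = k
  · exact hmono k p q hp.1 hq.1 hp.2 hq.2 T hT hin hout
  · rw [hr.apply_eq_zero hp hT, hr.apply_eq_zero hq hT]

theorem SelectionMonotone.apply_transfer_sub_mem_Icc (hmono : SelectionMonotone n r)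
    (hr : IsRoundingRule n r) {u v : Fin n} {ε : ℝ} (hε : 0 ≤ ε) (hp : IsResidueVector k p)
    (hq : IsResidueVector k (p + ε • transfer u v)) (huT : u ∈ T) (hvT : v ∉ T) :
    r (p + ε • transfer u v) T - r p T ∈ Set.Icc 0 (2 * ε) := by
  set q := p + ε • transfer u v with hq_def
  have huv : u ≠ v := ne_of_mem_of_not_mem huT hvT
  have hgain : ∀ A : Finset (Fin n), u ∈ A → v ∉ A → r p A ≤ r q A := fun A huA hvA =>
    hmono.apply_le hr hp hq
      (fun i hi => le_add_smul_transfer_apply hε (ne_of_mem_of_not_mem hi hvA))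
      (fun i hi => add_smul_transfer_apply_le hε (ne_of_mem_of_not_mem huA hi).symm)
  have hloss : ∀ A : Finset (Fin n), v ∈ A → u ∉ A → r q A ≤ r p A := fun A hvA huA =>
    hmono.apply_le hr hq hp
      (fun i hi => add_smul_transfer_apply_le hε (ne_of_mem_of_not_mem hi huA))
      (fun i hi => le_add_smul_transfer_apply hε (ne_of_mem_of_not_mem hvA hi).symm)
  obtain ⟨-, -, -, hp_marg⟩ := hr p k hp.1 hp.2
  obtain ⟨-, -, -, hq_marg⟩ := hr q k hq.1 hq.2
  have hdiff_u : ∑ A with u ∈ A, (r q A - r p A) = ε := by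
    rw [sum_sub_distrib, hq_marg, hp_marg, hq_def, add_smul_transfer_apply_left huv]
    ring
  have hdiff_v : ∑ A with v ∈ A, (r q A - r p A) = -ε := by
    rw [sum_sub_distrib, hq_marg, hp_marg, hq_def, add_smul_transfer_apply_right huv]
    ring
  have hcount := sum_filter_mem_sub_sum_filter_mem univ (fun A => r q A - r p A) u v
  have hloss_sum : ∑ A with v ∈ A ∧ u ∉ A, (r q A - r p A) ≤ 0 :=
    sum_nonpos fun A hA => sub_nonpos.mpr <| hloss A (mem_filter.mp hA).2.1 (mem_filter.mp hA).2.2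
  have hT_le : r q T - r p T ≤ ∑ A with u ∈ A ∧ v ∉ A, (r q A - r p A) :=
    single_le_sum (fun A hA => sub_nonneg.mpr (hgain A (mem_filter.mp hA).2.1
      (mem_filter.mp hA).2.2)) (mem_filter.mpr ⟨mem_univ T, huT, hvT⟩)
  exact ⟨sub_nonneg.mpr (hgain T huT hvT), by linarith⟩

theorem SelectionMonotone.abs_apply_transfer_sub_le_of_pivot_notMem
    (hmono : SelectionMonotone n r) (hr : IsRoundingRule n r) (hp : IsResidueVector k p)
    {u v j : Fin n} (huv : u ≠ v) (huT : u ∈ T) (hvT : v ∈ T) (hjT : j ∉ T) {d : ℝ} (hd : 0 ≤ d)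
    (hu : p u + d < 1) (hv : d ≤ p v) (hj : d ≤ p j) :
    |r (p + d • transfer u v) T - r p T| ≤ 2 * d := by
  have hapex : p + d • transfer u v + d • transfer v j = p + d • transfer u j := by
    simp only [transfer]
    module
  have hq := hp.add_smul_transfer (ne_of_mem_of_not_mem huT hjT) hd hu hj
  have h₁ := hmono.apply_transfer_sub_mem_Icc hr hd hp hq huT hjT
  have h₂ := hmono.apply_transfer_sub_mem_Icc hr hd (hp.add_smul_transfer huv hd hu hv)
    (hapex ▸ hq) hvT hjT
  rw [hapex] at h₂
  exact abs_sub_le_iff.mpr ⟨by linarith [h₁.2, h₂.1], by linarith [h₁.1, h₂.2]⟩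

theorem SelectionMonotone.abs_apply_transfer_sub_le_of_pivot_mem
    (hmono : SelectionMonotone n r) (hr : IsRoundingRule n r) (hp : IsResidueVector k p)
    {u v w : Fin n} (huv : u ≠ v) (huT : u ∉ T) (hvT : v ∉ T) (hwT : w ∈ T) {d : ℝ} (hd : 0 ≤ d)
    (hu : p u + d < 1) (hv : d ≤ p v) (hw : p w + d < 1) :
    |r (p + d • transfer u v) T - r p T| ≤ 2 * d := by
  have hapex : p + d • transfer u v + d • transfer w u = p + d • transfer w v := by
    simp only [transfer]
    module
  have hq := hp.add_smul_transfer (ne_of_mem_of_not_mem hwT hvT) hd hw hv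
  have h₁ := hmono.apply_transfer_sub_mem_Icc hr hd hp hq hwT hvT
  have hp' := hp.add_smul_transfer huv hd hu hv
  have h₂ := hmono.apply_transfer_sub_mem_Icc hr hd hp' (hapex ▸ hq) hwT huT
  rw [hapex] at h₂
  exact abs_sub_le_iff.mpr ⟨by linarith [h₁.2, h₂.1], by linarith [h₁.1, h₂.2]⟩

theorem SelectionMonotone.abs_apply_transfer_sub_le_of_mem_of_mem
    (hmono : SelectionMonotone n r) (hr : IsRoundingRule n r) (hp : IsResidueVector k p)
    {u v : Fin n} (huv : u ≠ v) (hT : T.card = k) (huT : u ∈ T) (hvT : v ∈ T) {δ : ℝ} (hδ : 0 ≤ δ)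
    (hu : p u + δ < 1) (hv : δ ≤ p v) :
    |r (p + δ • transfer u v) T - r p T| ≤ 2 * δ := by
  obtain ⟨j, hjT, hj⟩ := hp.exists_notMem_pos hT ⟨u, huT⟩
  have hju : j ≠ u := (ne_of_mem_of_not_mem huT hjT).symm
  have hjv : j ≠ v := (ne_of_mem_of_not_mem hvT hjT).symm
  simpa using abs_sub_le_mul_of_small_steps (g := fun t => r (p + t • transfer u v) T) hj hδ
    fun s t hs hst htδ hts => by
      have hpath : p + t • transfer u v = p + s • transfer u v + (t - s) • transfer u v := by
        module
      rw [hpath]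
      refine hmono.abs_apply_transfer_sub_le_of_pivot_notMem hr
        (hp.add_smul_transfer huv hs (by linarith) (by linarith)) huv huT hvT hjT
        (by linarith) ?_ ?_ ?_
      · rw [add_smul_transfer_apply_left huv]; linarith
      · rw [add_smul_transfer_apply_right huv]; linarith
      · rw [add_smul_transfer_apply_of_ne hju hjv]; linarith

theorem SelectionMonotone.abs_apply_transfer_sub_le_of_notMem_of_notMem
    (hmono : SelectionMonotone n r) (hr : IsRoundingRule n r) (hp : IsResidueVector k p)
    {u v : Fin n} (huv : u ≠ v) (hT : T.card = k) (huT : u ∉ T) (hvT : v ∉ T) {δ : ℝ}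
    (hδ : 0 < δ) (hu : p u + δ < 1) (hv : δ ≤ p v) :
    |r (p + δ • transfer u v) T - r p T| ≤ 2 * δ := by
  obtain ⟨w, hwT⟩ := hp.nonempty_of_pos hT (hδ.trans_le hv)
  have hwu : w ≠ u := ne_of_mem_of_not_mem hwT huT
  have hwv : w ≠ v := ne_of_mem_of_not_mem hwT hvT
  simpa using abs_sub_le_mul_of_small_steps (g := fun t => r (p + t • transfer u v) T)
    (sub_pos.mpr (hp.1 w).2) hδ.le fun s t hs hst htδ hts => by
      have hpath : p + t • transfer u v = p + s • transfer u v + (t - s) • transfer u v := by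
        module
      rw [hpath]
      refine hmono.abs_apply_transfer_sub_le_of_pivot_mem hr
        (hp.add_smul_transfer huv hs (by linarith) (by linarith)) huv huT hvT hwT
        (by linarith) ?_ ?_ ?_
      · rw [add_smul_transfer_apply_left huv]; linarith
      · rw [add_smul_transfer_apply_right huv]; linarith
      · rw [add_smul_transfer_apply_of_ne hwu hwv]; linarith

theorem SelectionMonotone.abs_apply_transfer_sub_le (hmono : SelectionMonotone n r)
    (hr : IsRoundingRule n r) (hp : IsResidueVector k p) {u v : Fin n} (huv : u ≠ v)
    (hT : T.card = k) {δ : ℝ} (hδ : 0 < δ) (hu : p u + δ < 1) (hv : δ ≤ p v) :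
    |r (p + δ • transfer u v) T - r p T| ≤ 2 * δ := by
  have hp' := hp.add_smul_transfer huv hδ.le hu hv
  by_cases huT : u ∈ T <;> by_cases hvT : v ∈ T
  · exact hmono.abs_apply_transfer_sub_le_of_mem_of_mem hr hp huv hT huT hvT hδ.le hu hv
  · have h := hmono.apply_transfer_sub_mem_Icc hr hδ.le hp hp' huT hvT
    exact abs_le.mpr ⟨by linarith [h.1], h.2⟩
  · have hback : p + δ • transfer u v + δ • transfer v u = p := by
      simp only [transfer]
      module
    have h := hmono.apply_transfer_sub_mem_Icc hr hδ.le hp' (by rwa [hback]) hvT huT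
    rw [hback] at h
    exact abs_le.mpr ⟨by linarith [h.2], by linarith [h.1]⟩
  · exact hmono.abs_apply_transfer_sub_le_of_notMem_of_notMem hr hp huv hT huT hvT hδ hu hv

end rounding

/-- Moving `δ` of residue from party `2` to party `1` changes the probability of
any `k`-element set by at most `2δ`, for any selection monotone rounding rule. -/
theorem selection_monotone_two_coordinate_lipschitz {n : ℕ} (hn : 2 ≤ n)
    (r : (Fin n → ℝ) → Finset (Fin n) → ℝ)
    (hr : IsRoundingRule n r) (hmono : SelectionMonotone n r)
    (k : ℕ) (p : Fin n → ℝ) (hp : ∀ i, 0 ≤ p i ∧ p i < 1)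
    (hsum : ∑ i, p i = (k : ℝ)) (δ : ℝ) (hδ0 : 0 < δ)
    (hδ2 : δ < p ⟨1, by omega⟩) (hδ1 : δ < 1 - p ⟨0, by omega⟩)
    (T : Finset (Fin n)) (hT : T.card = k) :
    |r (fun i => if i.val = 0 then p i + δ else if i.val = 1 then p i - δ else p i) T -
        r p T| ≤ 2 * δ := by
  have huv : (⟨0, by omega⟩ : Fin n) ≠ ⟨1, by omega⟩ := by simp
  have hshift : (fun i : Fin n => if i.val = 0 then p i + δ else if i.val = 1 then p i - δ
      else p i) = p + δ • transfer ⟨0, by omega⟩ ⟨1, by omega⟩ := by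
    funext i
    simp only [transfer, Pi.add_apply, Pi.smul_apply, Pi.sub_apply, Pi.single_apply,
      Fin.ext_iff, smul_eq_mul]
    split_ifs <;> first | omega | ring
  rw [hshift]
  exact hmono.abs_apply_transfer_sub_le hr ⟨hp, hsum⟩ huv hT hδ0 (by linarith) hδ2.le
end
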